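/- arXiv:1510.07840 — 5 statements merged into one kernel-verified Lean document; each statement's English description precedes it below -/
import Mathlib

section
/- For any c > 0 and 0 < γ ≤ 1, the function t ↦ exp(-c·t^γ) on [0,∞) is completely monotone, i.e., it is infinitely differentiable on (0,∞) and (-1)^n times its n-th derivative is nonnegative for all n. -/
open Finset

/-- A function is completely monotone on `(0,∞)` if it is infinitely differentiable there
and `(-1)^n f^(n)(t) ≥ 0` for all `t > 0` and all `n`. -/
def CompletelyMonotoneOn (f : ℝ → ℝ) : Prop :=
  ContDiffOn ℝ (⊤ : ℕ∞) f (Set.Ioi 0) ∧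
    ∀ (n : ℕ) (t : ℝ), 0 < t → 0 ≤ (-1 : ℝ) ^ n * iteratedDeriv n f t

private lemma key (c γ : ℝ) (hc : 0 < c) (hγ0 : 0 < γ) (hγ1 : γ ≤ 1) (n : ℕ) :
    ∃ a : ℕ → ℝ, (∀ j, 0 ≤ (-1 : ℝ) ^ n * a j) ∧ (∀ j, n < j → a j = 0) ∧
      ∀ t : ℝ, 0 < t → iteratedDeriv n (fun t : ℝ => Real.exp (-c * t ^ γ)) t =
        Real.exp (-c * t ^ γ) * ∑ j ∈ range (n + 1), a j * t ^ ((j : ℝ) * γ - n) := by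
  induction n with
  | zero =>
    refine ⟨fun j => if j = 0 then 1 else 0, ?_, ?_, ?_⟩
    · intro j; by_cases h : j = 0 <;> simp [h]
    · intro j hj; simp [hj.ne']
    · intro t ht
      simp [iteratedDeriv_zero, Real.rpow_zero]
  | succ n ih =>
    obtain ⟨a, hsign, hvan, heq⟩ := ih
    refine ⟨fun j => a j * ((j : ℝ) * γ - n) - c * γ * (if j = 0 then 0 else a (j - 1)),
      ?_, ?_, ?_⟩
    · intro j
      have h1 : 0 ≤ (-1 : ℝ) ^ (n + 1) * (a j * ((j : ℝ) * γ - n)) := by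
        rcases le_or_gt j n with hj | hj
        · have h2 : (j : ℝ) * γ - n ≤ 0 := by
            have hjg : (j : ℝ) * γ ≤ j := by nlinarith [Nat.cast_nonneg (α := ℝ) j]
            have hjn : (j : ℝ) ≤ n := by exact_mod_cast hj
            linarith
          have hs := hsign j
          calc (0:ℝ) ≤ ((-1 : ℝ) ^ n * a j) * (n - (j : ℝ) * γ) := by
                apply mul_nonneg hs; linarith
            _ = (-1 : ℝ) ^ (n + 1) * (a j * ((j : ℝ) * γ - n)) := by ring
        · rw [hvan j hj]; simp
      have h2 : 0 ≤ (-1 : ℝ) ^ (n + 1) * -(c * γ * (if j = 0 then 0 else a (j - 1))) := by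
        rcases Nat.eq_zero_or_pos j with hj | hj
        · simp [hj]
        · have hs := hsign (j - 1)
          rw [if_neg hj.ne']
          calc (0:ℝ) ≤ (c * γ) * ((-1 : ℝ) ^ n * a (j - 1)) := by positivity
            _ = (-1 : ℝ) ^ (n + 1) * -(c * γ * a (j - 1)) := by ring
      calc (0:ℝ) ≤ (-1 : ℝ) ^ (n + 1) * (a j * ((j : ℝ) * γ - n)) +
            (-1 : ℝ) ^ (n + 1) * -(c * γ * (if j = 0 then 0 else a (j - 1))) := by linarith
        _ = _ := by ring
    · intro j hj
      have h1 : a j = 0 := hvan j (by omega)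
      have h2 : (if j = 0 then (0:ℝ) else a (j - 1)) = 0 := by
        rw [if_neg (by omega)]; exact hvan _ (by omega)
      simp only [h1, h2]; ring
    · intro t ht
      have hmem : Set.Ioi (0:ℝ) ∈ nhds t := (isOpen_Ioi).mem_nhds ht
      have heq' : iteratedDeriv (n + 1) (fun t : ℝ => Real.exp (-c * t ^ γ)) t =
          deriv (fun t => Real.exp (-c * t ^ γ) *
            ∑ j ∈ range (n + 1), a j * t ^ ((j : ℝ) * γ - n)) t := by
        rw [iteratedDeriv_succ]
        apply Filter.EventuallyEq.deriv_eq
        filter_upwards [hmem] with x hx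
        exact heq x hx
      rw [heq']
      have hexp : HasDerivAt (fun t : ℝ => Real.exp (-c * t ^ γ))
          (Real.exp (-c * t ^ γ) * (-c * (γ * t ^ (γ - 1)))) t := by
        have h1 : HasDerivAt (fun t : ℝ => -c * t ^ γ) (-c * (γ * t ^ (γ - 1))) t :=
          (Real.hasDerivAt_rpow_const (Or.inl ht.ne')).const_mul (-c)
        exact h1.exp
      have hsum : HasDerivAt (fun t : ℝ => ∑ j ∈ range (n + 1), a j * t ^ ((j : ℝ) * γ - n))
          (∑ j ∈ range (n + 1), a j * (((j : ℝ) * γ - n) * t ^ ((j : ℝ) * γ - n - 1))) t := by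
        apply HasDerivAt.fun_sum
        intro j _
        exact (Real.hasDerivAt_rpow_const (Or.inl ht.ne')).const_mul (a j)
      rw [(hexp.fun_mul hsum).deriv]
      set E := Real.exp (-c * t ^ γ) with hE
      have hrw : ∀ x y : ℝ, t ^ (x + y) = t ^ x * t ^ y := fun x y => Real.rpow_add ht x y
      -- RHS manipulation
      have S0 : E * ∑ j ∈ range (n + 1 + 1),
            (a j * ((j : ℝ) * γ - n) - c * γ * (if j = 0 then 0 else a (j - 1))) *
              t ^ ((j : ℝ) * γ - ((n : ℕ) + 1 : ℕ)) =
          (∑ j ∈ range (n + 2), E * (a j * ((j : ℝ) * γ - n) * t ^ ((j : ℝ) * γ - (n:ℝ) - 1)))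
          + (∑ j ∈ range (n + 2), E * (-(c * γ) * (if j = 0 then 0 else a (j - 1)) *
              t ^ ((j : ℝ) * γ - (n:ℝ) - 1))) := by
        rw [Finset.mul_sum, ← Finset.sum_add_distrib]
        refine Finset.sum_congr rfl fun j _ => ?_
        have : ((j : ℝ) * γ - ((n : ℕ) + 1 : ℕ)) = ((j : ℝ) * γ - (n:ℝ) - 1) := by
          push_cast; ring
        rw [this]; ring
      have S2 : (∑ j ∈ range (n + 2), E * (a j * ((j : ℝ) * γ - n) * t ^ ((j : ℝ) * γ - (n:ℝ) - 1)))
          = ∑ j ∈ range (n + 1), E * (a j * (((j : ℝ) * γ - n) * t ^ ((j : ℝ) * γ - n - 1))) := by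
        rw [Finset.sum_range_succ, hvan (n + 1) (by omega)]
        simp only [zero_mul, mul_zero, zero_mul, add_zero]
        exact Finset.sum_congr rfl fun j _ => by ring
      have S3 : (∑ j ∈ range (n + 2), E * (-(c * γ) * (if j = 0 then 0 else a (j - 1)) *
              t ^ ((j : ℝ) * γ - (n:ℝ) - 1)))
          = ∑ i ∈ range (n + 1), E * (-(c * γ) * a i * (t ^ (γ - 1) * t ^ ((i : ℝ) * γ - n))) := by
        rw [Finset.sum_range_succ']
        have h0 : (if (0:ℕ) = 0 then (0:ℝ) else a (0 - 1)) = 0 := if_pos rfl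
        rw [h0]
        simp only [if_neg (Nat.succ_ne_zero _), Nat.add_sub_cancel,
          mul_zero, zero_mul, add_zero]
        refine Finset.sum_congr rfl fun i _ => ?_
        have e1 : ((i + 1 : ℕ) : ℝ) * γ - (n : ℝ) - 1 = (γ - 1) + ((i : ℝ) * γ - n) := by
          push_cast; ring
        rw [e1, hrw]
      rw [S0, S2, S3, Finset.mul_sum, Finset.mul_sum, ← Finset.sum_add_distrib,
        ← Finset.sum_add_distrib]
      refine Finset.sum_congr rfl fun j _ => ?_
      ring
    

theorem exp_neg_rpow_completelyMonotone (c γ : ℝ) (hc : 0 < c) (hγ0 : 0 < γ) (hγ1 : γ ≤ 1) :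
    CompletelyMonotoneOn (fun t : ℝ => Real.exp (-c * t ^ γ)) := by
  constructor
  · apply Real.contDiff_exp.comp_contDiffOn
    intro x hx
    exact (contDiffAt_const.mul (Real.contDiffAt_rpow_const_of_ne (ne_of_gt hx))).contDiffWithinAt
  · intro n t ht
    obtain ⟨a, hsign, _, heq⟩ := key c γ hc hγ0 hγ1 n
    rw [heq t ht]
    have h1 : (-1 : ℝ) ^ n * (Real.exp (-c * t ^ γ) *
          ∑ j ∈ range (n + 1), a j * t ^ ((j : ℝ) * γ - n)) =
        ∑ j ∈ range (n + 1), Real.exp (-c * t ^ γ) *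
          (((-1 : ℝ) ^ n * a j) * t ^ ((j : ℝ) * γ - n)) := by
      rw [Finset.mul_sum, Finset.mul_sum]
      exact Finset.sum_congr rfl fun j _ => by ring
    rw [h1]
    refine Finset.sum_nonneg fun j _ => ?_
    exact mul_nonneg (Real.exp_nonneg _)
      (mul_nonneg (hsign j) (Real.rpow_nonneg ht.le _))
end

section
/- Let Q ⊆ ℝ, let m : Q → ℝ^{p×p} be such that m(ξ) is symmetric positive semidefinite for each ξ ∈ Q, and let C_ξ : ℝ^{d+1} → ℝ be a positive definite function (covariance function) for each ξ ∈ Q. Suppose for each fixed lag k ∈ ℝ^{d+1} and all i,j the product m_ij(ξ)·C_ξ(k) is integrable with respect to a positive measure F on Q. Then the matrix-valued function C(k) = [∫_Q m_ij(ξ) C_ξ(k) F(dξ)]_{i,j=1}^p is a valid p-variate matrix covariance function, i.e., for any points x_1,…,x_n ∈ ℝ^{d+1} and any λ ∈ ℝ^{np}, the quadratic form λ^T Σ λ ≥ 0, where Σ is the np×np block matrix with blocks C(x_α − x_β). -/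
/-!
Factor `m ξ = Bᵀ B`. For `ξ ∈ Q` the block quadratic form of `[m ξ i j * C_ξ (x α - x β)]`
is then `∑ r, ∑ α, ∑ β, a_r α * a_r β * C_ξ (x α - x β)` with `a_r α = (B λ_α)_r`, a sum of
quadratic forms of the positive definite function `C_ξ`, hence nonnegative. Integrability of
the entries lets the finite sums pass under the integral over `Q`.
-/

open MeasureTheory Matrix

/-- A univariate positive definite (covariance) function on `ℝ^{d+1}`. -/
def IsPosDefFn {d : ℕ} (C : EuclideanSpace ℝ (Fin (d + 1)) → ℝ) : Prop :=
  ∀ (n : ℕ) (x : Fin n → EuclideanSpace ℝ (Fin (d + 1))) (a : Fin n → ℝ),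
    0 ≤ ∑ α, ∑ β, a α * a β * C (x α - x β)

/- `s` need not be measurable: if `f` is not integrable on `s` the integral is `0`, and otherwise
`f` is a.e.-measurable for `μ.restrict s`, which is all `ae_restrict_iff₀` asks for. -/
theorem setIntegral_nonneg_of_forall_mem {X : Type*} [MeasurableSpace X] {μ : Measure X}
    {s : Set X} {f : X → ℝ} (hf : ∀ x ∈ s, 0 ≤ f x) : 0 ≤ ∫ x in s, f x ∂μ := by
  by_cases hint : IntegrableOn f s μ
  · refine setIntegral_nonneg_of_ae_restrict <| (ae_restrict_iff₀ ?_).2 (ae_of_all _ hf)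
    exact hint.aemeasurable.nullMeasurable measurableSet_Ici
  · rw [integral_undef hint]

section BlockQuadForm

variable {ι κ : Type*} [Fintype ι] [Fintype κ]

/-- `λᵀ Σ λ` for the block matrix `Σ = [K α β i j]`, with `λ` indexed by block `α` and entry `i`. -/
def blockQuadForm (lam : ι → κ → ℝ) (K : ι → ι → κ → κ → ℝ) : ℝ :=
  ∑ α, ∑ β, ∑ i, ∑ j, lam α i * lam β j * K α β i j

theorem sum_mul_sum_mul_eq_dotProduct_mulVec (M : Matrix κ κ ℝ) (u v : κ → ℝ) (c : ℝ) :
    ∑ i, ∑ j, u i * v j * (M i j * c) = u ⬝ᵥ (M *ᵥ v) * c := by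
  simp only [dotProduct, mulVec, Finset.sum_mul, Finset.mul_sum]
  exact Finset.sum_congr rfl fun i _ => Finset.sum_congr rfl fun j _ => by ring

theorem blockQuadForm_mul_nonneg {M : Matrix κ κ ℝ} (hM : M.PosSemidef) {K : ι → ι → ℝ}
    (hK : ∀ a : ι → ℝ, 0 ≤ ∑ α, ∑ β, a α * a β * K α β) (lam : ι → κ → ℝ) :
    0 ≤ blockQuadForm lam fun α β i j => M i j * K α β := by
  classical
  open scoped MatrixOrder in
  obtain ⟨B, rfl⟩ := CStarAlgebra.nonneg_iff_eq_star_mul_self.mp hM.nonneg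
  have hgram : ∀ u v : κ → ℝ, u ⬝ᵥ ((star B * B) *ᵥ v) = (B *ᵥ u) ⬝ᵥ (B *ᵥ v) := fun u v => by
    rw [← mulVec_mulVec, dotProduct_mulVec, star_eq_conjTranspose,
      conjTranspose_eq_transpose_of_trivial, vecMul_transpose]
  calc 0 ≤ ∑ r, ∑ α, ∑ β, (B *ᵥ lam α) r * (B *ᵥ lam β) r * K α β :=
        Finset.sum_nonneg fun r _ => hK fun α => (B *ᵥ lam α) r
    _ = ∑ α, ∑ β, (B *ᵥ lam α) ⬝ᵥ (B *ᵥ lam β) * K α β := by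
        simp only [dotProduct, Finset.sum_mul]
        rw [Finset.sum_comm]
        exact Finset.sum_congr rfl fun α _ => Finset.sum_comm
    _ = _ := by
        simp only [blockQuadForm, sum_mul_sum_mul_eq_dotProduct_mulVec, hgram]

theorem integral_blockQuadForm {X : Type*} [MeasurableSpace X] {μ : Measure X}
    {g : ι → ι → κ → κ → X → ℝ} (hg : ∀ α β i j, Integrable (g α β i j) μ)
    (lam : ι → κ → ℝ) :
    ∫ ξ, blockQuadForm lam (fun α β i j => g α β i j ξ) ∂μ =
      blockQuadForm lam fun α β i j => ∫ ξ, g α β i j ξ ∂μ := by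
  simp (disch := fun_prop) only [blockQuadForm, integral_finsetSum, integral_const_mul]

end BlockQuadForm

/-- Scale mixtures of a univariate covariance function against a family of positive
semidefinite matrices yield a valid matrix-valued covariance function. -/
theorem mixture_matrix_covariance (d p : ℕ) (Q : Set ℝ) (F : Measure ℝ)
    (m : ℝ → Matrix (Fin p) (Fin p) ℝ)
    (C : ℝ → EuclideanSpace ℝ (Fin (d + 1)) → ℝ)
    (hm : ∀ ξ ∈ Q, (m ξ).PosSemidef)
    (hC : ∀ ξ ∈ Q, IsPosDefFn (C ξ))
    (hInt : ∀ (k : EuclideanSpace ℝ (Fin (d + 1))) (i j : Fin p),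
      IntegrableOn (fun ξ => m ξ i j * C ξ k) Q F) :
    ∀ (n : ℕ) (x : Fin n → EuclideanSpace ℝ (Fin (d + 1)))
      (lam : Fin n → Fin p → ℝ),
      0 ≤ ∑ α, ∑ β, ∑ i, ∑ j,
        lam α i * lam β j * ∫ ξ in Q, m ξ i j * C ξ (x α - x β) ∂F := by
  intro n x lam
  calc 0 ≤ ∫ ξ in Q, blockQuadForm lam (fun α β i j => m ξ i j * C ξ (x α - x β)) ∂F :=
        setIntegral_nonneg_of_forall_mem fun ξ hξ =>
          blockQuadForm_mul_nonneg (hm ξ hξ) (hC ξ hξ n x) lam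
    _ = _ := integral_blockQuadForm (fun α β i j => hInt (x α - x β) i j) lam
end

section
/- For ν > 0 and r > 0 and all h ∈ ℝ^d, the Matérn function satisfies the scale mixture representation M(h; r, ν) = ∫_0^∞ exp(−‖h‖² ξ) · (r²/4)^ν · ξ^{−1−ν}/Γ(ν) · exp(−r²/(4ξ)) dξ, where M(h; r, ν) = (2^{1−ν}/Γ(ν)) (r‖h‖)^ν K_ν(r‖h‖) and K_ν is the modified Bessel function of the second kind. -/
open MeasureTheory Real

/-- The modified Bessel function of the second kind, via its integral representation
`K_ν(x) = ∫_0^∞ exp(-x cosh t) cosh(ν t) dt`. -/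
noncomputable def besselK (ν x : ℝ) : ℝ :=
  ∫ t in Set.Ioi (0 : ℝ), Real.exp (-x * Real.cosh t) * Real.cosh (ν * t)

/-- The Matérn correlation function `M(h; r, ν)`, extended by continuity at `0`. -/
noncomputable def matern (t r ν : ℝ) : ℝ :=
  if t = 0 then 1
  else (2 : ℝ) ^ (1 - ν) / Real.Gamma ν * (r * t) ^ ν * besselK ν (r * t)

/-!
Substituting `ξ = r² / (4u)` turns the mixture integral into
`Γ(ν)⁻¹ ∫₀^∞ u^(ν-1) exp(-u - x² / (4u)) du` with `x = r‖h‖`. For `x = 0` this is Euler's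
integral for `Γ(ν)`. For `x > 0` the substitution `u = (x/2) eˢ` turns it into
`Γ(ν)⁻¹ (x/2)^ν ∫_ℝ exp(-x cosh s) e^(νs) ds`, and the integral over `ℝ` equals that of the
even part `exp(-x cosh s) cosh(νs)`, which is `2 K_ν(x)`.
-/

open Set

section ChangeOfVariables

variable {E : Type*} [NormedAddCommGroup E] [NormedSpace ℝ E]

theorem integral_comp_div_Ioi (g : ℝ → E) {c : ℝ} (hc : 0 < c) :
    ∫ u in Ioi 0, (c / u ^ 2) • g (c / u) = ∫ ξ in Ioi 0, g ξ := by
  have himage : (fun u : ℝ => c / u) '' Ioi 0 = Ioi 0 := by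
    ext ξ
    exact ⟨fun ⟨u, hu, hξ⟩ => hξ ▸ div_pos hc hu,
      fun hξ => ⟨c / ξ, div_pos hc hξ, div_div_cancel₀ hc.ne'⟩⟩
  have hderiv : ∀ u ∈ Ioi (0 : ℝ),
      HasDerivWithinAt (fun u => c / u) (-(c / u ^ 2)) (Ioi 0) u := fun u hu => by
    simpa [div_eq_mul_inv] using ((hasDerivAt_inv (ne_of_gt hu)).const_mul c).hasDerivWithinAt
  have hinj : InjOn (fun u : ℝ => c / u) (Ioi 0) := fun u _ v _ huv =>
    inv_injective (mul_left_cancel₀ hc.ne' huv)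
  conv_rhs =>
    rw [← himage, integral_image_eq_integral_abs_deriv_smul measurableSet_Ioi hderiv hinj]
  refine setIntegral_congr_fun measurableSet_Ioi fun u hu => ?_
  rw [abs_neg, abs_of_pos (div_pos hc (pow_pos hu 2))]

theorem image_univ_const_mul_exp {a : ℝ} (ha : 0 < a) :
    (fun s : ℝ => a * exp s) '' univ = Ioi 0 := by
  ext u
  refine ⟨fun ⟨s, _, hs⟩ => hs ▸ mul_pos ha (exp_pos s),
    fun hu => ⟨log (u / a), trivial, ?_⟩⟩
  change a * exp (log (u / a)) = u
  rw [exp_log (div_pos hu ha), mul_div_cancel₀ _ ha.ne']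

theorem hasDerivWithinAt_const_mul_exp (a s : ℝ) :
    HasDerivWithinAt (fun s => a * exp s) (a * exp s) univ s :=
  ((hasDerivAt_exp s).const_mul a).hasDerivWithinAt

theorem injOn_const_mul_exp {a : ℝ} (ha : 0 < a) : InjOn (fun s => a * exp s) univ :=
  fun _ _ _ _ h => exp_injective (mul_left_cancel₀ ha.ne' h)

theorem integrable_comp_const_mul_exp_iff (g : ℝ → E) {a : ℝ} (ha : 0 < a) :
    Integrable (fun s => (a * exp s) • g (a * exp s)) ↔ IntegrableOn g (Ioi 0) := by
  rw [← image_univ_const_mul_exp ha, integrableOn_image_iff_integrableOn_abs_deriv_smul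
    MeasurableSet.univ (fun s _ => hasDerivWithinAt_const_mul_exp a s) (injOn_const_mul_exp ha),
    integrableOn_univ]
  simp only [abs_of_pos (mul_pos ha (exp_pos _))]

theorem integral_comp_const_mul_exp (g : ℝ → E) {a : ℝ} (ha : 0 < a) :
    ∫ s, (a * exp s) • g (a * exp s) = ∫ u in Ioi 0, g u := by
  rw [← image_univ_const_mul_exp ha, integral_image_eq_integral_abs_deriv_smul
    MeasurableSet.univ (fun s _ => hasDerivWithinAt_const_mul_exp a s) (injOn_const_mul_exp ha),
    Measure.restrict_univ]
  simp only [abs_of_pos (mul_pos ha (exp_pos _))]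

end ChangeOfVariables

theorem integrableOn_rpow_mul_exp_neg_sub_div {ν : ℝ} (hν : 0 < ν) {c : ℝ} (hc : 0 ≤ c) :
    IntegrableOn (fun u : ℝ => u ^ (ν - 1) * exp (-u - c / u)) (Ioi 0) := by
  refine (GammaIntegral_convergent hν).mono' ?_ ?_
  · refine (ContinuousOn.mul (fun u hu => ?_) ?_).aestronglyMeasurable measurableSet_Ioi
    · exact (continuousAt_rpow_const u _ (Or.inl (ne_of_gt hu))).continuousWithinAt
    · exact continuous_exp.comp_continuousOn
        (continuousOn_id.neg.sub (continuousOn_const.div continuousOn_id fun u hu => ne_of_gt hu))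
  · filter_upwards [ae_restrict_mem measurableSet_Ioi] with u (hu : 0 < u)
    rw [norm_of_nonneg (by positivity), mul_comm (exp (-u))]
    gcongr
    linarith [div_nonneg hc hu.le]

theorem integral_exp_neg_mul_cosh_mul_exp {ν x : ℝ}
    (hf : Integrable fun s => exp (-x * cosh s) * exp (ν * s)) :
    ∫ s, exp (-x * cosh s) * exp (ν * s) = 2 * besselK ν x := by
  have heven : ∀ s, exp (-x * cosh s) * exp (ν * s) + exp (-x * cosh (-s)) * exp (ν * -s) =
      2 * (exp (-x * cosh |s|) * cosh (ν * |s|)) := fun s => by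
    have hcosh : cosh (ν * |s|) = cosh (ν * s) := by
      rcases abs_choice s with hs | hs <;> simp only [hs, mul_neg, cosh_neg]
    rw [cosh_abs, cosh_neg, hcosh, cosh_eq (ν * s), mul_neg]
    ring
  have hneg :
      ∫ s, exp (-x * cosh (-s)) * exp (ν * -s) = ∫ s, exp (-x * cosh s) * exp (ν * s) :=
    integral_neg_eq_self (fun s => exp (-x * cosh s) * exp (ν * s)) volume
  calc ∫ s, exp (-x * cosh s) * exp (ν * s)
      = ((∫ s, exp (-x * cosh s) * exp (ν * s))
          + ∫ s, exp (-x * cosh (-s)) * exp (ν * -s)) / 2 := by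
        rw [hneg]; ring
    _ = ∫ s, exp (-x * cosh |s|) * cosh (ν * |s|) := by
        have hf_neg : Integrable fun s => exp (-x * cosh (-s)) * exp (ν * -s) := hf.comp_neg
        rw [← integral_add hf hf_neg]
        simp_rw [heven, integral_const_mul]
        ring
    _ = 2 * besselK ν x := integral_comp_abs (f := fun t => exp (-x * cosh t) * cosh (ν * t))

theorem integral_rpow_mul_exp_neg_sub_div_eq_besselK {ν x : ℝ} (hν : 0 < ν) (hx : 0 < x) :
    ∫ u in Ioi 0, u ^ (ν - 1) * exp (-u - x ^ 2 / (4 * u)) =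
      2 ^ (1 - ν) * x ^ ν * besselK ν x := by
  have ha : 0 < x / 2 := half_pos hx
  -- `u = (x/2) eˢ` turns `u + x² / (4u)` into `x cosh s`
  have hsubst : ∀ s, (x / 2 * exp s) •
      ((x / 2 * exp s) ^ (ν - 1) * exp (-(x / 2 * exp s) - x ^ 2 / (4 * (x / 2 * exp s)))) =
        (x / 2) ^ ν * (exp (-x * cosh s) * exp (ν * s)) := fun s => by
    have hexp : -(x / 2 * exp s) - x ^ 2 / (4 * (x / 2 * exp s)) = -x * cosh s := by
      rw [cosh_eq, exp_neg]
      field_simp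
      ring
    have hpow : x / 2 * exp s * (x / 2 * exp s) ^ (ν - 1) = (x / 2) ^ ν * exp (ν * s) := by
      have hu : x / 2 * exp s ≠ 0 := (mul_pos ha (exp_pos s)).ne'
      rw [rpow_sub_one hu, mul_div_cancel₀ _ hu, mul_rpow ha.le (exp_pos s).le, ← exp_mul,
        mul_comm s]
    rw [smul_eq_mul, hexp, ← mul_assoc, hpow]
    ring
  have hint : Integrable fun s => exp (-x * cosh s) * exp (ν * s) := by
    have h := (integrable_comp_const_mul_exp_iff _ ha).2
      (integrableOn_rpow_mul_exp_neg_sub_div hν (by positivity : 0 ≤ x ^ 2 / 4))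
    simp only [div_div, hsubst] at h
    exact (integrable_const_mul_iff (isUnit_iff_ne_zero.2 (rpow_pos_of_pos ha ν).ne') _).1 h
  calc ∫ u in Ioi 0, u ^ (ν - 1) * exp (-u - x ^ 2 / (4 * u))
      = ∫ s, (x / 2) ^ ν * (exp (-x * cosh s) * exp (ν * s)) := by
        simp only [← integral_comp_const_mul_exp _ ha, hsubst]
    _ = (x / 2) ^ ν * (2 * besselK ν x) := by
        rw [integral_const_mul, integral_exp_neg_mul_cosh_mul_exp hint]
    _ = 2 ^ (1 - ν) * x ^ ν * besselK ν x := by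
        rw [div_rpow hx.le zero_le_two, rpow_sub zero_lt_two, rpow_one]
        field_simp

theorem integral_inverseGamma_mixture_eq (t : ℝ) {r : ℝ} (hr : r ≠ 0) (ν : ℝ) :
    ∫ ξ in Ioi 0, exp (-t ^ 2 * ξ) * (r ^ 2 / 4) ^ ν * ξ ^ (-1 - ν) / Gamma ν *
        exp (-r ^ 2 / (4 * ξ))
      = (Gamma ν)⁻¹ * ∫ u in Ioi 0, u ^ (ν - 1) * exp (-u - (r * t) ^ 2 / (4 * u)) := by
  set c := r ^ 2 / 4 with hc
  have hc_pos : 0 < c := by positivity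
  rw [← integral_comp_div_Ioi _ hc_pos, ← integral_const_mul]
  refine setIntegral_congr_fun measurableSet_Ioi fun u (hu : 0 < u) => ?_
  have hpow : c / u ^ 2 * c ^ ν * (c / u) ^ (-1 - ν) = u ^ (ν - 1) := by
    rw [div_rpow hc_pos.le hu.le, rpow_sub_one hu.ne', rpow_sub hc_pos, rpow_sub hu,
      rpow_neg_one, rpow_neg_one]
    field_simp
  have hexp : -t ^ 2 * (c / u) = -((r * t) ^ 2 / (4 * u)) := by
    rw [hc]; field_simp
  have hexp' : -r ^ 2 / (4 * (c / u)) = -u := by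
    rw [hc]; field_simp
  rw [smul_eq_mul, hexp, hexp', sub_eq_add_neg (-u), exp_add, ← hpow]
  ring

/-- Scale mixture representation of the Matérn covariance function. -/
theorem matern_scale_mixture (d : ℕ) (r ν : ℝ) (hr : 0 < r) (hν : 0 < ν)
    (h : EuclideanSpace ℝ (Fin d)) :
    matern ‖h‖ r ν =
      ∫ ξ in Set.Ioi (0 : ℝ),
        Real.exp (-‖h‖ ^ 2 * ξ) * (r ^ 2 / 4) ^ ν * ξ ^ (-1 - ν) / Real.Gamma ν *
          Real.exp (-r ^ 2 / (4 * ξ)) := by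
  have hΓ : Gamma ν ≠ 0 := (Gamma_pos_of_pos hν).ne'
  rw [integral_inverseGamma_mixture_eq _ hr.ne', matern]
  rcases (norm_nonneg h).eq_or_lt with h0 | hpos
  · have hEuler : ∫ u in Ioi 0, u ^ (ν - 1) * exp (-u - (r * 0) ^ 2 / (4 * u)) = Gamma ν := by
      simp only [mul_zero, zero_pow two_ne_zero, zero_div, sub_zero, Gamma_eq_integral hν,
        mul_comm]
    rw [if_pos h0.symm, ← h0, hEuler, inv_mul_cancel₀ hΓ]
  · rw [if_neg hpos.ne', integral_rpow_mul_exp_neg_sub_div_eq_besselK hν (mul_pos hr hpos)]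
    field_simp
end

section
/- For α > 0, 0 < a ≤ 1, and 0 ≤ b ≤ 1, the function ψ(x) = (α x^a + 1)^b on [0,∞) is positive and its derivative is completely monotone on (0,∞). -/
/-- Nonnegative combinations of `c * x^p * (α x^a + 1)^q` with `p, q ≤ 0`. -/
inductive Good (α a : ℝ) : (ℝ → ℝ) → Prop
  | term (c p q : ℝ) (hc : 0 ≤ c) (hp : p ≤ 0) (hq : q ≤ 0) :
      Good α a (fun x => c * x ^ p * (α * x ^ a + 1) ^ q)
  | add {f g : ℝ → ℝ} (hf : Good α a f) (hg : Good α a g) : Good α a (fun x => f x + g x)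

lemma base_pos {α a x : ℝ} (hα : 0 < α) (hx : 0 ≤ x) : 0 < α * x ^ a + 1 := by
  have := Real.rpow_nonneg hx a
  nlinarith

lemma Good.nonneg' {α a : ℝ} {f : ℝ → ℝ} (hα : 0 < α) (hf : Good α a f) :
    ∀ x, 0 < x → 0 ≤ f x := by
  induction hf with
  | term c p q hc hp hq =>
    intro x hx
    have h1 : 0 ≤ x ^ p := Real.rpow_nonneg hx.le p
    have h2 : (0:ℝ) ≤ (α * x ^ a + 1) ^ q := (Real.rpow_pos_of_pos (base_pos hα hx.le) q).le
    positivity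
  | add hf hg ihf ihg =>
    intro x hx
    exact add_nonneg (ihf x hx) (ihg x hx)

lemma Good.contDiffOn {α a : ℝ} {f : ℝ → ℝ} (hα : 0 < α) (hf : Good α a f) :
    ContDiffOn ℝ (⊤ : ℕ∞) f (Set.Ioi 0) := by
  induction hf with
  | term c p q hc hp hq =>
    intro x hx
    have hx' : (0:ℝ) < x := hx
    have h1 : ContDiffAt ℝ (⊤ : ℕ∞) (fun x : ℝ => x ^ p) x :=
      Real.contDiffAt_rpow_const_of_ne hx'.ne'
    have hu : ContDiffAt ℝ (⊤ : ℕ∞) (fun x : ℝ => α * x ^ a + 1) x :=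
      (contDiffAt_const.mul (Real.contDiffAt_rpow_const_of_ne hx'.ne')).add contDiffAt_const
    have h2 : ContDiffAt ℝ (⊤ : ℕ∞) (fun x : ℝ => (α * x ^ a + 1) ^ q) x :=
      hu.rpow_const_of_ne (base_pos hα hx'.le).ne'
    exact ((contDiffAt_const.mul h1).mul h2).contDiffWithinAt
  | add hf hg ihf ihg => exact ihf.add ihg

lemma Good.hasDeriv {α a : ℝ} {f : ℝ → ℝ} (hα : 0 < α) (ha0 : 0 < a) (ha1 : a ≤ 1)
    (hf : Good α a f) :
    ∃ g : ℝ → ℝ, Good α a g ∧ ∀ x, 0 < x → HasDerivAt f (-(g x)) x := by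
  induction hf with
  | term c p q hc hp hq =>
    refine ⟨fun x => (c * (-p)) * x ^ (p-1) * (α * x ^ a + 1) ^ q +
        (c * (-(q * a * α))) * x ^ (p+a-1) * (α * x ^ a + 1) ^ (q-1), ?_, ?_⟩
    · exact Good.add
        (Good.term _ _ _ (by nlinarith) (by linarith) hq)
        (Good.term _ _ _ (by nlinarith [mul_nonneg (mul_nonneg (neg_nonneg.2 hq) ha0.le) hα.le])
          (by linarith) (by linarith))
    · intro x hx
      have hp' : HasDerivAt (fun x : ℝ => x ^ p) (p * x ^ (p-1)) x :=
        Real.hasDerivAt_rpow_const (Or.inl hx.ne')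
      have hu : HasDerivAt (fun x : ℝ => α * x ^ a + 1) (α * (a * x ^ (a-1))) x :=
        ((Real.hasDerivAt_rpow_const (Or.inl hx.ne')).const_mul α).add_const 1
      have huq : HasDerivAt (fun x : ℝ => (α * x ^ a + 1) ^ q)
          (α * (a * x ^ (a-1)) * q * (α * x ^ a + 1) ^ (q-1)) x :=
        hu.rpow_const (Or.inl (base_pos hα hx.le).ne')
      have hmul := ((hp'.mul huq).const_mul c)
      convert hmul using 1
      case e'_4 => rfl
      case e'_5 => rfl
      case e'_8 => funext y; rw [Pi.mul_apply]; ring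
      have hxx : x ^ (p+a-1) = x ^ p * x ^ (a-1) := by
        rw [show p+a-1 = p + (a-1) by ring, Real.rpow_add hx]
      simp only [hxx]; ring
  | add hf hg ihf ihg =>
    obtain ⟨g1, hg1, hd1⟩ := ihf
    obtain ⟨g2, hg2, hd2⟩ := ihg
    refine ⟨fun x => g1 x + g2 x, hg1.add hg2, fun x hx => ?_⟩
    have := (hd1 x hx).add (hd2 x hx)
    convert this using 1
    case e'_4 => rfl
    case e'_5 => rfl
    case e'_8 => rfl
    ring

/-- `ψ(x) = (α x^a + 1)^b` is positive and has completely monotone derivative. -/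
theorem bernstein_example (α a b : ℝ) (hα : 0 < α) (ha0 : 0 < a) (ha1 : a ≤ 1)
    (hb0 : 0 ≤ b) (hb1 : b ≤ 1) :
    (∀ x : ℝ, 0 ≤ x → 0 < (α * x ^ a + 1) ^ b) ∧
      CompletelyMonotoneOn (deriv fun x : ℝ => (α * x ^ a + 1) ^ b) := by
  set ψ : ℝ → ℝ := fun x => (α * x ^ a + 1) ^ b with hψ
  have hpos : ∀ x : ℝ, 0 ≤ x → 0 < (α * x ^ a + 1) ^ b := fun x hx =>
    Real.rpow_pos_of_pos (base_pos hα hx) b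
  -- the derivative equals a Good function on (0,∞)
  have hg0 : Good α a (fun x => (b * α * a) * x ^ (a-1) * (α * x ^ a + 1) ^ (b-1)) :=
    Good.term _ _ _ (by positivity) (by linarith) (by linarith)
  have hderiv_eq : ∀ x : ℝ, 0 < x →
      deriv ψ x = (b * α * a) * x ^ (a-1) * (α * x ^ a + 1) ^ (b-1) := by
    intro x hx
    have hu : HasDerivAt (fun x : ℝ => α * x ^ a + 1) (α * (a * x ^ (a-1))) x :=
      ((Real.hasDerivAt_rpow_const (Or.inl hx.ne')).const_mul α).add_const 1
    have h : HasDerivAt ψ (α * (a * x ^ (a-1)) * b * (α * x ^ a + 1) ^ (b-1)) x :=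
      hu.rpow_const (Or.inl (base_pos hα hx.le).ne')
    rw [h.deriv]; ring
  -- iterated derivatives
  have key : ∀ n : ℕ, ∃ g : ℝ → ℝ, Good α a g ∧
      ∀ t : ℝ, 0 < t → iteratedDeriv n (deriv ψ) t = (-1) ^ n * g t := by
    intro n
    induction n with
    | zero =>
      exact ⟨_, hg0, fun t ht => by simpa [iteratedDeriv_zero] using hderiv_eq t ht⟩
    | succ n ih =>
      obtain ⟨g, hg, heq⟩ := ih
      obtain ⟨g', hg', hd⟩ := hg.hasDeriv hα ha0 ha1
      refine ⟨g', hg', fun t ht => ?_⟩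
      rw [iteratedDeriv_succ]
      have hev : iteratedDeriv n (deriv ψ) =ᶠ[nhds t] fun s => (-1) ^ n * g s :=
        Filter.eventuallyEq_of_mem (isOpen_Ioi.mem_nhds ht) (fun s hs => heq s hs)
      rw [hev.deriv_eq, (((hd t ht).const_mul ((-1:ℝ) ^ n)).deriv)]
      ring
  refine ⟨hpos, ?_, ?_⟩
  · exact (hg0.contDiffOn hα).congr (fun x hx => hderiv_eq x hx)
  · intro n t ht
    obtain ⟨g, hg, heq⟩ := key n
    rw [heq t ht, ← mul_assoc, ← pow_add, Even.neg_one_pow ⟨n, rfl⟩, one_mul]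
    exact hg.nonneg' hα t ht
end

section
/- For ν > 0 and r > 0, the function t ↦ (2^{1−ν}/Γ(ν))(r√t)^ν K_ν(r√t) on (0,∞) is completely monotone, i.e., the Matérn covariance h ↦ M(h; r, ν) equals φ(‖h‖²) for a completely monotone function φ with φ(0⁺) = 1. -/
open Real

section Aux

open MeasureTheory Set Filter

lemma aux_pow_mul_exp_le (n : ℕ) {a ξ : ℝ} (ha : 0 < a) (hξ : 0 ≤ ξ) :
    ξ ^ n * Real.exp (-(a * ξ)) ≤ (n.factorial : ℝ) / a ^ n := by
  have hE : Real.exp (a*ξ) * Real.exp (-(a*ξ)) = 1 := by rw [← Real.exp_add]; simp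
  have h1 : (a * ξ) ^ n ≤ (n.factorial : ℝ) * Real.exp (a * ξ) := by
    have hn : (0:ℝ) < n.factorial := by positivity
    have h := Real.pow_div_factorial_le_exp (x := a * ξ) (by positivity) n
    have := (div_le_iff₀ hn).mp h
    linarith
  have h2 : ξ ^ n * Real.exp (-(a * ξ)) = (a*ξ)^n * Real.exp (-(a*ξ)) / a ^ n := by
    rw [mul_pow]; field_simp
  rw [h2, div_le_div_iff₀ (by positivity) (by positivity)]
  calc (a*ξ)^n * Real.exp (-(a*ξ)) * a ^ n
      ≤ ((n.factorial : ℝ) * Real.exp (a*ξ)) * Real.exp (-(a*ξ)) * a ^ n := by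
        have hP : (0:ℝ) ≤ Real.exp (-(a*ξ)) * a ^ n := by positivity
        nlinarith [mul_le_mul_of_nonneg_right h1 hP]
    _ = (n.factorial : ℝ) * (Real.exp (a*ξ) * Real.exp (-(a*ξ))) * a ^ n := by ring
    _ = (n.factorial : ℝ) * a ^ n := by rw [hE]; ring

section Laplace

variable {w : ℝ → ℝ}

lemma lap_integrable (hw_cont : ContinuousOn w (Ioi 0))
    (hw_nn : ∀ ξ ∈ Ioi (0:ℝ), 0 ≤ w ξ) (hw_int : IntegrableOn w (Ioi 0))
    (n : ℕ) {a : ℝ} (ha : 0 < a) :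
    IntegrableOn (fun ξ => ξ ^ n * Real.exp (-(a * ξ)) * w ξ) (Ioi 0) := by
  have hmeas : AEStronglyMeasurable (fun ξ => ξ ^ n * Real.exp (-(a * ξ)) * w ξ)
      (volume.restrict (Ioi 0)) := by
    refine ContinuousOn.aestronglyMeasurable ?_ measurableSet_Ioi
    exact (((continuous_pow n).mul (by fun_prop)).continuousOn).mul hw_cont
  refine Integrable.mono' (g := fun ξ => (n.factorial : ℝ) / a ^ n * w ξ)
    (hw_int.const_mul _) hmeas ?_
  filter_upwards [ae_restrict_mem measurableSet_Ioi] with ξ hξ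
  have hξ0 : (0:ℝ) < ξ := hξ
  have hwξ := hw_nn ξ hξ
  rw [Real.norm_eq_abs, abs_of_nonneg (by positivity)]
  exact mul_le_mul_of_nonneg_right (aux_pow_mul_exp_le n ha hξ0.le) hwξ

lemma lap_hasDerivAt (hw_cont : ContinuousOn w (Ioi 0))
    (hw_nn : ∀ ξ ∈ Ioi (0:ℝ), 0 ≤ w ξ) (hw_int : IntegrableOn w (Ioi 0))
    (n : ℕ) {t₀ : ℝ} (ht : 0 < t₀) :
    HasDerivAt (fun t => ∫ ξ in Ioi (0:ℝ), ξ ^ n * Real.exp (-(t * ξ)) * w ξ)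
      (-∫ ξ in Ioi (0:ℝ), ξ ^ (n+1) * Real.exp (-(t₀ * ξ)) * w ξ) t₀ := by
  have key := hasDerivAt_integral_of_dominated_loc_of_deriv_le
    (μ := volume.restrict (Ioi 0)) (x₀ := t₀)
    (F := fun t ξ => ξ ^ n * Real.exp (-(t * ξ)) * w ξ)
    (F' := fun t ξ => -(ξ ^ (n+1) * Real.exp (-(t * ξ)) * w ξ))
    (bound := fun ξ => ξ ^ (n+1) * Real.exp (-(t₀/2 * ξ)) * w ξ)
    (Metric.ball_mem_nhds t₀ (half_pos ht))
    (Filter.Eventually.of_forall fun t => by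
      refine ContinuousOn.aestronglyMeasurable ?_ measurableSet_Ioi
      exact (((continuous_pow n).mul (by fun_prop)).continuousOn).mul hw_cont)
    (lap_integrable hw_cont hw_nn hw_int n ht)
    (by
      refine AEStronglyMeasurable.neg ?_
      refine ContinuousOn.aestronglyMeasurable ?_ measurableSet_Ioi
      exact (((continuous_pow (n+1)).mul (by fun_prop)).continuousOn).mul hw_cont)
    (by
      filter_upwards [ae_restrict_mem measurableSet_Ioi] with ξ hξ t htb
      have hξ0 : (0:ℝ) < ξ := hξ
      have hwξ := hw_nn ξ hξ
      have ht2 : t₀/2 ≤ t := by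
        have := abs_lt.mp (mem_ball_iff_norm.mp htb)
        linarith [this.1]
      rw [norm_neg, Real.norm_eq_abs, abs_of_nonneg (by positivity)]
      have hee : Real.exp (-(t * ξ)) ≤ Real.exp (-(t₀/2 * ξ)) :=
        Real.exp_le_exp.mpr (by nlinarith)
      exact mul_le_mul_of_nonneg_right
        (mul_le_mul_of_nonneg_left hee (by positivity)) hwξ)
    (lap_integrable hw_cont hw_nn hw_int (n+1) (half_pos ht))
    (by
      filter_upwards [ae_restrict_mem measurableSet_Ioi] with ξ hξ t htb
      have h1 : HasDerivAt (fun t : ℝ => -(t * ξ)) (-(1 * ξ)) t :=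
        ((hasDerivAt_id t).mul_const ξ).neg
      have h2 := ((h1.exp).const_mul (ξ ^ n)).mul_const (w ξ)
      refine h2.congr_deriv ?_
      rw [pow_succ]
      ring)
  have := key.2
  rwa [MeasureTheory.integral_neg] at this

lemma lap_nonneg (hw_nn : ∀ ξ ∈ Ioi (0:ℝ), 0 ≤ w ξ) (n : ℕ) (t : ℝ) :
    0 ≤ ∫ ξ in Ioi (0:ℝ), ξ ^ n * Real.exp (-(t * ξ)) * w ξ := by
  refine setIntegral_nonneg measurableSet_Ioi fun ξ hξ => ?_
  have hξ0 : (0:ℝ) < ξ := hξ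
  have := hw_nn ξ hξ
  positivity

lemma lap_iteratedDeriv (hw_cont : ContinuousOn w (Ioi 0))
    (hw_nn : ∀ ξ ∈ Ioi (0:ℝ), 0 ≤ w ξ) (hw_int : IntegrableOn w (Ioi 0)) (n : ℕ) :
    Set.EqOn (iteratedDeriv n (fun t => ∫ ξ in Ioi (0:ℝ), Real.exp (-(t * ξ)) * w ξ))
      (fun t => (-1:ℝ)^n * ∫ ξ in Ioi (0:ℝ), ξ ^ n * Real.exp (-(t * ξ)) * w ξ) (Ioi 0) := by
  induction n with
  | zero => intro t ht; simp
  | succ n ih =>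
    intro t ht
    rw [iteratedDeriv_succ]
    have hev : (iteratedDeriv n (fun t => ∫ ξ in Ioi (0:ℝ), Real.exp (-(t * ξ)) * w ξ))
        =ᶠ[nhds t] (fun t => (-1:ℝ)^n * ∫ ξ in Ioi (0:ℝ), ξ ^ n * Real.exp (-(t * ξ)) * w ξ) := by
      filter_upwards [Ioi_mem_nhds ht] with s hs
      exact ih hs
    rw [hev.deriv_eq]
    have hd := (lap_hasDerivAt hw_cont hw_nn hw_int n ht).const_mul ((-1:ℝ)^n)
    rw [hd.deriv]
    simp only [pow_succ]
    ring


lemma lap_complex_diff (hw_cont : ContinuousOn w (Ioi 0))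
    (hw_nn : ∀ ξ ∈ Ioi (0:ℝ), 0 ≤ w ξ) (hw_int : IntegrableOn w (Ioi 0))
    {z₀ : ℂ} (hz : 0 < z₀.re) :
    HasDerivAt (fun z : ℂ => ∫ ξ in Ioi (0:ℝ), Complex.exp (-(z * ξ)) * (w ξ : ℂ))
      (∫ ξ in Ioi (0:ℝ), -(ξ : ℂ) * Complex.exp (-(z₀ * ξ)) * (w ξ : ℂ)) z₀ := by
  have hmeas : ∀ z : ℂ, AEStronglyMeasurable (fun ξ : ℝ => Complex.exp (-(z * ξ)) * (w ξ : ℂ))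
      (volume.restrict (Ioi 0)) := fun z => by
    refine ContinuousOn.aestronglyMeasurable ?_ measurableSet_Ioi
    exact (Continuous.continuousOn (by fun_prop)).mul
      (Complex.continuous_ofReal.comp_continuousOn hw_cont)
  have key := hasDerivAt_integral_of_dominated_loc_of_deriv_le
    (μ := volume.restrict (Ioi 0)) (x₀ := z₀)
    (F := fun (z : ℂ) (ξ : ℝ) => Complex.exp (-(z * ξ)) * (w ξ : ℂ))
    (F' := fun (z : ℂ) (ξ : ℝ) => -(ξ : ℂ) * Complex.exp (-(z * ξ)) * (w ξ : ℂ))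
    (bound := fun ξ => ξ ^ 1 * Real.exp (-(z₀.re/2 * ξ)) * w ξ)
    (Metric.ball_mem_nhds z₀ (half_pos hz))
    (Filter.Eventually.of_forall hmeas)
    (by
      refine Integrable.mono' (g := fun ξ => ξ ^ 0 * Real.exp (-(z₀.re * ξ)) * w ξ)
        (lap_integrable hw_cont hw_nn hw_int 0 hz) (hmeas z₀) ?_
      filter_upwards [ae_restrict_mem measurableSet_Ioi] with ξ hξ
      have hwξ := hw_nn ξ hξ
      have : (-(z₀ * (ξ:ℂ))).re = -(z₀.re * ξ) := by simp
      rw [norm_mul, Complex.norm_exp, this,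
        Complex.norm_real, Real.norm_eq_abs, abs_of_nonneg hwξ]
      simp)
    (by
      refine ContinuousOn.aestronglyMeasurable ?_ measurableSet_Ioi
      exact ((Continuous.continuousOn (by fun_prop)).mul
        (Complex.continuous_ofReal.comp_continuousOn hw_cont)))
    (by
      filter_upwards [ae_restrict_mem measurableSet_Ioi] with ξ hξ z hzb
      have hξ0 : (0:ℝ) < ξ := hξ
      have hwξ := hw_nn ξ hξ
      have hre : z₀.re/2 ≤ z.re := by
        have h1 : |(z - z₀).re| ≤ ‖z - z₀‖ := Complex.abs_re_le_norm _
        have h2 : ‖z - z₀‖ < z₀.re/2 := mem_ball_iff_norm.mp hzb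
        have := abs_lt.mp (lt_of_le_of_lt h1 h2)
        simp only [Complex.sub_re] at this
        linarith [this.1]
      have hzre : (-(z * (ξ:ℂ))).re = -(z.re * ξ) := by simp
      rw [norm_mul, norm_mul, norm_neg, Complex.norm_exp, hzre, Complex.norm_real, Complex.norm_real,
        Real.norm_eq_abs, Real.norm_eq_abs,
        abs_of_nonneg hwξ, abs_of_nonneg hξ0.le, pow_one]
      have hee : Real.exp (-(z.re * ξ)) ≤ Real.exp (-(z₀.re/2 * ξ)) :=
        Real.exp_le_exp.mpr (by nlinarith)
      exact mul_le_mul_of_nonneg_right (mul_le_mul_of_nonneg_left hee hξ0.le) hwξ)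
    (lap_integrable hw_cont hw_nn hw_int 1 (half_pos hz))
    (by
      filter_upwards [ae_restrict_mem measurableSet_Ioi] with ξ hξ z hzb
      have h1 : HasDerivAt (fun z : ℂ => -(z * ξ)) (-(1 * ξ)) z :=
        ((hasDerivAt_id z).mul_const (ξ:ℂ)).neg
      have h2 := (h1.cexp).mul_const ((w ξ : ℂ))
      refine h2.congr_deriv ?_
      ring)
  exact key.2

lemma lap_analytic (hw_cont : ContinuousOn w (Ioi 0))
    (hw_nn : ∀ ξ ∈ Ioi (0:ℝ), 0 ≤ w ξ) (hw_int : IntegrableOn w (Ioi 0)) :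
    AnalyticOnNhd ℝ (fun t : ℝ => ∫ ξ in Ioi (0:ℝ), Real.exp (-(t * ξ)) * w ξ) (Ioi 0) := by
  set g : ℂ → ℂ := fun z => ∫ ξ in Ioi (0:ℝ), Complex.exp (-(z * ξ)) * (w ξ : ℂ) with hg
  have hS : IsOpen {z : ℂ | 0 < z.re} := by
    have : {z : ℂ | 0 < z.re} = Complex.re ⁻¹' (Ioi 0) := rfl
    rw [this]; exact isOpen_Ioi.preimage Complex.continuous_re
  have hgan : AnalyticOnNhd ℂ g {z : ℂ | 0 < z.re} := by
    refine DifferentiableOn.analyticOnNhd (fun z hz => ?_) hS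
    exact ((lap_complex_diff hw_cont hw_nn hw_int hz).differentiableAt).differentiableWithinAt
  intro t ht
  have hta : AnalyticAt ℝ (fun s : ℝ => (g s).re) t := by
    have h1 : AnalyticAt ℝ Complex.ofRealCLM t := Complex.ofRealCLM.analyticAt t
    have h2 : AnalyticAt ℝ g (t : ℂ) := (hgan (t : ℂ) (by simpa using ht)).restrictScalars
    have h3 : AnalyticAt ℝ Complex.reCLM (g (t : ℂ)) := Complex.reCLM.analyticAt _
    have := (h3.comp h2).comp h1
    simpa [Function.comp_def] using this
  refine hta.congr ?_
  filter_upwards [Ioi_mem_nhds ht] with s hs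
  have hsc : (g s).re = ∫ ξ in Ioi (0:ℝ), Real.exp (-(s * ξ)) * w ξ := by
    have : g (s : ℂ) = ((∫ ξ in Ioi (0:ℝ), Real.exp (-(s * ξ)) * w ξ : ℝ) : ℂ) := by
      show (∫ ξ in Ioi (0:ℝ), Complex.exp (-((s:ℂ) * (ξ:ℂ))) * ((w ξ : ℝ) : ℂ)) = _
      have hcast : ∀ ξ ∈ Ioi (0:ℝ),
          Complex.exp (-((s:ℂ) * (ξ:ℂ))) * ((w ξ : ℝ) : ℂ)
            = ((Real.exp (-(s * ξ)) * w ξ : ℝ) : ℂ) := by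
        intro ξ hξ
        push_cast [← Complex.ofReal_exp]
        norm_num
      rw [setIntegral_congr_fun measurableSet_Ioi hcast]
      exact integral_ofReal
    rw [this, Complex.ofReal_re]
  exact hsc

end Laplace

lemma inv_image (c : ℝ) (hc : 0 < c) : (fun ξ : ℝ => c / ξ) '' Ioi 0 = Ioi 0 := by
  ext y
  simp only [mem_image, mem_Ioi]
  constructor
  · rintro ⟨x, hx, rfl⟩; positivity
  · intro hy; exact ⟨c / y, by positivity, by field_simp⟩

lemma inv_hasDeriv (c : ℝ) {ξ : ℝ} (hξ : ξ ∈ Ioi (0:ℝ)) :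
    HasDerivWithinAt (fun ξ : ℝ => c / ξ) (-(c / ξ ^ 2)) (Ioi 0) ξ := by
  have hne : ξ ≠ 0 := ne_of_gt hξ
  have h := (hasDerivAt_inv hne).const_mul c
  have : c * -(ξ ^ 2)⁻¹ = -(c / ξ ^ 2) := by field_simp
  rw [this] at h
  exact (h.congr_deriv rfl).hasDerivWithinAt |>.congr (fun x _ => by rw [div_eq_mul_inv]) (by rw [div_eq_mul_inv])

lemma inv_injOn (c : ℝ) (hc : 0 < c) : InjOn (fun ξ : ℝ => c / ξ) (Ioi 0) := by
  intro a ha b hb h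
  have ha0 : (0:ℝ) < a := ha
  have hb0 : (0:ℝ) < b := hb
  field_simp at h
  linarith

lemma inv_change (c : ℝ) (hc : 0 < c) (g : ℝ → ℝ) :
    (∫ x in Ioi (0:ℝ), g x) = ∫ ξ in Ioi (0:ℝ), c / ξ ^ 2 * g (c / ξ) := by
  have h := integral_image_eq_integral_abs_deriv_smul measurableSet_Ioi
    (fun ξ hξ => inv_hasDeriv c hξ) (inv_injOn c hc) g
  rw [inv_image c hc] at h
  rw [h]
  refine setIntegral_congr_fun measurableSet_Ioi fun ξ hξ => ?_
  have hξ0 : (0:ℝ) < ξ := hξ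
  rw [abs_neg, abs_of_nonneg (by positivity : (0:ℝ) ≤ c / ξ ^ 2), smul_eq_mul]

lemma inv_change_integrable (c : ℝ) (hc : 0 < c) (g : ℝ → ℝ)
    (hg : IntegrableOn g (Ioi 0)) :
    IntegrableOn (fun ξ => c / ξ ^ 2 * g (c / ξ)) (Ioi 0) := by
  have h := (integrableOn_image_iff_integrableOn_abs_deriv_smul measurableSet_Ioi
    (fun ξ hξ => inv_hasDeriv c hξ) (inv_injOn c hc) g)
  rw [inv_image c hc] at h
  refine (h.mp hg).congr_fun (fun ξ hξ => ?_) measurableSet_Ioi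
  have hξ0 : (0:ℝ) < ξ := hξ
  beta_reduce
  rw [abs_neg, abs_of_nonneg (by positivity : (0:ℝ) ≤ c / ξ ^ 2), smul_eq_mul]

lemma w_pointwise {ν c : ℝ} (hc : 0 < c) {ξ : ℝ} (hξ0 : (0:ℝ) < ξ) :
    c / ξ ^ 2 * (Real.exp (-(c/ξ)) * (c/ξ) ^ (ν-1))
      = c ^ ν * (ξ ^ (-1-ν) * Real.exp (-(c/ξ))) := by
  have e1 : (c/ξ) ^ (ν-1) = c^(ν-1) / ξ^(ν-1) := Real.div_rpow hc.le hξ0.le (ν-1)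
  have e2 : (ξ^2)⁻¹ * (ξ^(ν-1))⁻¹ = ξ ^ (-1-ν) := by
    rw [← Real.rpow_natCast ξ 2, ← Real.rpow_neg hξ0.le, ← Real.rpow_neg hξ0.le,
      ← Real.rpow_add hξ0]
    congr 1
    push_cast
    ring
  have e3 : c ^ ν = c * c ^ (ν-1) := by
    have h := Real.rpow_add hc 1 (ν - 1)
    rw [Real.rpow_one] at h
    rw [show (1 + (ν-1) : ℝ) = ν by ring] at h
    exact h
  rw [e1, ← e2, e3]
  have hp1 : ξ^(ν-1) ≠ 0 := (Real.rpow_pos_of_pos hξ0 _).ne'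
  have hp2 : (ξ:ℝ)^2 ≠ 0 := by positivity
  field_simp

lemma w_integral {ν c : ℝ} (hν : 0 < ν) (hc : 0 < c) :
    IntegrableOn (fun ξ:ℝ => ξ ^ (-1-ν) * Real.exp (-(c/ξ))) (Ioi 0) ∧
    ∫ ξ in Ioi (0:ℝ), ξ ^ (-1-ν) * Real.exp (-(c/ξ)) = Real.Gamma ν / c^ν := by
  have hg : IntegrableOn (fun x : ℝ => Real.exp (-x) * x ^ (ν-1)) (Ioi 0) :=
    Real.GammaIntegral_convergent hν
  have hcν : (0:ℝ) < c ^ ν := Real.rpow_pos_of_pos hc ν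
  have hInt2 : IntegrableOn (fun ξ : ℝ => c ^ ν * (ξ ^ (-1-ν) * Real.exp (-(c/ξ))))
      (Ioi 0) := by
    refine (inv_change_integrable c hc _ hg).congr_fun (fun ξ hξ => ?_) measurableSet_Ioi
    exact w_pointwise hc hξ
  constructor
  · have h2 : IntegrableOn (fun ξ : ℝ => (c^ν)⁻¹ * (c ^ ν * (ξ ^ (-1-ν) * Real.exp (-(c/ξ)))))
        (Ioi 0) := hInt2.const_mul ((c^ν)⁻¹)
    refine h2.congr_fun (fun ξ hξ => ?_) measurableSet_Ioi
    field_simp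
  · have h1 : Real.Gamma ν = ∫ ξ in Ioi (0:ℝ), c ^ ν * (ξ ^ (-1-ν) * Real.exp (-(c/ξ))) := by
      rw [Real.Gamma_eq_integral hν, inv_change c hc]
      exact setIntegral_congr_fun measurableSet_Ioi fun ξ hξ => w_pointwise hc hξ
    rw [MeasureTheory.integral_const_mul] at h1
    rw [eq_div_iff hcν.ne']
    linarith

lemma w0_cont (ν q : ℝ) : ContinuousOn
    (fun ξ : ℝ => ξ ^ (-1-ν) * Real.exp (-(q/ξ))) (Ioi 0) := by
  refine ContinuousOn.mul ?_ ?_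
  · exact fun ξ hξ => (Real.continuousAt_rpow_const ξ _ (Or.inl (ne_of_gt hξ))).continuousWithinAt
  · refine Real.continuous_exp.comp_continuousOn ?_
    exact (continuousOn_const.div continuousOn_id fun ξ hξ => ne_of_gt hξ).neg

lemma w0_nn (ν q : ℝ) : ∀ ξ ∈ Ioi (0:ℝ), 0 ≤ ξ ^ (-1-ν) * Real.exp (-(q/ξ)) := by
  intro ξ hξ
  have : (0:ℝ) < ξ := hξ
  positivity

set_option maxHeartbeats 1000000 in
theorem besselK_repr (r ν t : ℝ) (hr : 0 < r) (hν : 0 < ν) (ht : 0 < t) :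
    (2 : ℝ) ^ (1 - ν) / Real.Gamma ν * (r * Real.sqrt t) ^ ν *
        besselK ν (r * Real.sqrt t)
      = ∫ ξ in Ioi (0:ℝ), Real.exp (-(t * ξ)) *
          ((r^2/4) ^ ν / Real.Gamma ν * (ξ ^ (-1-ν) * Real.exp (-((r^2/4)/ξ)))) := by
  set x : ℝ := r * Real.sqrt t with hxdef
  have hx : 0 < x := by positivity
  have hx2 : x ^ 2 = r ^ 2 * t := by
    rw [hxdef, mul_pow, sq_sqrt ht.le]
  set c : ℝ := x / (2 * t) with hcdef
  have hc : 0 < c := by positivity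
  set q : ℝ := r ^ 2 / 4 with hqdef
  have hq : 0 < q := by positivity
  have hxc : x * c = r ^ 2 / 2 := by
    rw [hcdef]; field_simp; linarith [hx2]
  have hxc2 : x / (2 * c) = t := by
    rw [hcdef]; field_simp
  set h : ℝ → ℝ := fun u => Real.exp (-x * Real.cosh u + ν * u) with hhdef
  -- the substituted integrand
  set G : ℝ → ℝ := fun ξ => ξ⁻¹ * ((c / ξ) ^ ν * Real.exp (-(t * ξ) - q / ξ)) with hGdef
  -- step B : pointwise identification
  have hB : ∀ ξ ∈ Ioi (0:ℝ), |(-(ξ⁻¹))| • h (Real.log c - Real.log ξ) = G ξ := by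
    intro ξ hξ
    have hξ0 : (0:ℝ) < ξ := hξ
    have hlog : Real.log c - Real.log ξ = Real.log (c / ξ) :=
      (Real.log_div hc.ne' hξ0.ne').symm
    have hcosh : Real.cosh (Real.log (c / ξ)) = (c / ξ + (c / ξ)⁻¹) / 2 :=
      Real.cosh_log (by positivity)
    have hrpow : (c / ξ) ^ ν = Real.exp (ν * Real.log (c / ξ)) := by
      rw [Real.rpow_def_of_pos (by positivity), mul_comm]
    have hval : -x * Real.cosh (Real.log (c / ξ)) = -(t * ξ) - q / ξ := by
      rw [hcosh]
      have hinv : (c / ξ)⁻¹ = ξ / c := by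
        rw [inv_div]
      rw [hinv]
      have hsplit : -x * ((c / ξ + ξ / c) / 2) = -((x * c / 2) / ξ) - (x / (2 * c)) * ξ := by
        field_simp
        ring
      have hxcq : x * c / 2 = q := by rw [hxc, hqdef]; ring
      rw [hsplit, hxcq, hxc2]
      ring
    rw [hhdef, hGdef, hlog]
    simp only [abs_neg, abs_inv, abs_of_pos hξ0, smul_eq_mul]
    rw [Real.exp_add, hval, hrpow]
    ring
  -- step A : change of variables
  have hderiv : ∀ ξ ∈ Ioi (0:ℝ),
      HasDerivWithinAt (fun ξ : ℝ => Real.log c - Real.log ξ) (-(ξ⁻¹)) (Ioi 0) ξ := by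
    intro ξ hξ
    have hξ0 : (0:ℝ) < ξ := hξ
    exact ((Real.hasDerivAt_log hξ0.ne').const_sub (Real.log c)).hasDerivWithinAt
  have hinj : InjOn (fun ξ : ℝ => Real.log c - Real.log ξ) (Ioi 0) := by
    intro a ha b hb hab
    have ha0 : (0:ℝ) < a := ha
    have hb0 : (0:ℝ) < b := hb
    have : Real.log a = Real.log b := by simpa using hab
    rw [← Real.exp_log ha0, ← Real.exp_log hb0, this]
  have himg : (fun ξ : ℝ => Real.log c - Real.log ξ) '' Ioi 0 = univ := by
    refine eq_univ_of_forall fun u => ?_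
    refine ⟨c * Real.exp (-u), mem_Ioi.mpr (by positivity), ?_⟩
    show Real.log c - Real.log (c * Real.exp (-u)) = u
    rw [Real.log_mul hc.ne' (Real.exp_pos _).ne', Real.log_exp]
    ring
  have hA : (∫ u : ℝ, h u) = ∫ ξ in Ioi (0:ℝ), G ξ := by
    have := integral_image_eq_integral_abs_deriv_smul measurableSet_Ioi hderiv hinj h
    rw [himg] at this
    rw [← setIntegral_univ, this]
    exact setIntegral_congr_fun measurableSet_Ioi hB
  -- integrability of G, transferred to h
  have hGint : IntegrableOn G (Ioi 0) := by
    have hbase := lap_integrable (w0_cont ν q) (w0_nn ν q) (w_integral hν hq).1 0 ht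
    have h2 : IntegrableOn (fun ξ : ℝ =>
        c ^ ν * (ξ ^ (0:ℕ) * Real.exp (-(t * ξ)) * (ξ ^ (-1-ν) * Real.exp (-(q/ξ)))))
        (Ioi 0) := hbase.const_mul _
    refine h2.congr_fun (fun ξ hξ => ?_) measurableSet_Ioi
    have hξ0 : (0:ℝ) < ξ := hξ
    have e1 : (c / ξ) ^ ν = c ^ ν * (ξ ^ ν)⁻¹ := by
      rw [Real.div_rpow hc.le hξ0.le, div_eq_mul_inv]
    have e2 : ξ ^ (-1-ν) = ξ⁻¹ * (ξ ^ ν)⁻¹ := by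
      rw [show (-1-ν:ℝ) = -1 + -ν by ring, Real.rpow_add hξ0, Real.rpow_neg_one,
        Real.rpow_neg hξ0.le]
    have e3 : Real.exp (-(t * ξ) - q / ξ) = Real.exp (-(t * ξ)) * Real.exp (-(q/ξ)) := by
      rw [← Real.exp_add]; ring_nf
    rw [hGdef]
    simp only [pow_zero, one_mul]
    rw [e1, e2, e3]
    ring
  have hhint : Integrable h := by
    have := (integrableOn_image_iff_integrableOn_abs_deriv_smul measurableSet_Ioi
      hderiv hinj h)
    rw [himg] at this
    rw [← integrableOn_univ]
    refine this.mpr ?_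
    refine hGint.congr_fun (fun ξ hξ => (hB ξ hξ).symm) measurableSet_Ioi
  -- step C : besselK as full-line integral
  have hC : 2 * besselK ν x = ∫ u : ℝ, h u := by
    have hsplit : (∫ u : ℝ, h u) = (∫ u in Iic (0:ℝ), h u) + ∫ u in Ioi (0:ℝ), h u :=
      (intervalIntegral.integral_Iic_add_Ioi hhint.integrableOn hhint.integrableOn).symm
    have hneg : (∫ u in Iic (0:ℝ), h u) = ∫ u in Ioi (0:ℝ), h (-u) := by
      have := _root_.integral_comp_neg_Iic (0:ℝ) (fun u => h (-u))
      simp only [neg_neg, neg_zero] at this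
      exact this
    have hcont : Continuous h := by
      rw [hhdef]; fun_prop
    have hIoi_neg_int : IntegrableOn (fun u => h (-u)) (Ioi 0) := by
      refine Integrable.mono' hhint.integrableOn ?_ ?_
      · exact ((hcont.comp continuous_neg).continuousOn).aestronglyMeasurable measurableSet_Ioi
      · filter_upwards [ae_restrict_mem measurableSet_Ioi] with u hu
        have hu0 : (0:ℝ) < u := hu
        rw [hhdef, Real.norm_eq_abs, abs_of_nonneg (Real.exp_pos _).le]
        apply Real.exp_le_exp.mpr
        rw [Real.cosh_neg]
        nlinarith [hν, hu0]
    have hsum : (∫ u in Ioi (0:ℝ), h (-u)) + (∫ u in Ioi (0:ℝ), h u)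
        = ∫ u in Ioi (0:ℝ), (h (-u) + h u) :=
      (integral_add hIoi_neg_int hhint.integrableOn).symm
    have hcosh2 : ∀ u : ℝ, h (-u) + h u
        = 2 * (Real.exp (-x * Real.cosh u) * Real.cosh (ν * u)) := by
      intro u
      rw [hhdef]
      simp only [Real.cosh_neg, mul_neg]
      rw [Real.cosh_eq (ν * u), Real.exp_add, Real.exp_add]
      ring
    rw [hsplit, hneg, hsum]
    rw [besselK]
    rw [← MeasureTheory.integral_const_mul]
    exact (setIntegral_congr_fun measurableSet_Ioi fun u _ => hcosh2 u).symm
  -- step D : combine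
  have hbk : besselK ν x = (1/2) * ∫ ξ in Ioi (0:ℝ), G ξ := by
    rw [← hA, ← hC]; ring
  rw [hbk]
  rw [show (2:ℝ) ^ (1-ν) / Real.Gamma ν * x ^ ν * ((1/2) * ∫ ξ in Ioi (0:ℝ), G ξ)
      = (2:ℝ) ^ (1-ν) / Real.Gamma ν * x ^ ν * (1/2) * ∫ ξ in Ioi (0:ℝ), G ξ by ring,
    ← MeasureTheory.integral_const_mul]
  refine setIntegral_congr_fun measurableSet_Ioi fun ξ hξ => ?_
  have hξ0 : (0:ℝ) < ξ := hξ
  have hΓ : Real.Gamma ν ≠ 0 := (Real.Gamma_pos_of_pos hν).ne'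
  have e1 : (c / ξ) ^ ν = c ^ ν * (ξ ^ ν)⁻¹ := by
    rw [Real.div_rpow hc.le hξ0.le, div_eq_mul_inv]
  have e2 : ξ ^ (-1-ν) = ξ⁻¹ * (ξ ^ ν)⁻¹ := by
    rw [show (-1-ν:ℝ) = -1 + -ν by ring, Real.rpow_add hξ0, Real.rpow_neg_one,
      Real.rpow_neg hξ0.le]
  have e3 : Real.exp (-(t * ξ) - q / ξ) = Real.exp (-(t * ξ)) * Real.exp (-(q/ξ)) := by
    rw [← Real.exp_add]; ring_nf
  have e4 : (2:ℝ) ^ (1-ν) * x ^ ν * c ^ ν * (1/2) = q ^ ν := by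
    have h21 : (2:ℝ) ^ (1-ν) = 2 * (2:ℝ) ^ (-ν) := by
      rw [show (1-ν:ℝ) = 1 + (-ν) by ring, Real.rpow_add (by norm_num), Real.rpow_one]
    have hxcν : x ^ ν * c ^ ν = (r^2/2) ^ ν := by
      rw [← Real.mul_rpow hx.le hc.le, hxc]
    have h2ν : (2:ℝ) ^ (-ν) = ((2:ℝ)⁻¹) ^ ν := by
      rw [Real.rpow_neg (by norm_num), ← Real.inv_rpow (by norm_num)]
    rw [h21, h2ν]
    rw [show (2:ℝ) * (2:ℝ)⁻¹ ^ ν * x ^ ν * c ^ ν * (1/2) = x ^ ν * c ^ ν * (2:ℝ)⁻¹ ^ ν by ring]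
    rw [hxcν, ← Real.mul_rpow (by positivity) (by norm_num)]
    rw [hqdef]
    congr 1
    ring
  rw [hGdef]
  simp only []
  rw [e1, e3, e2, ← e4]
  ring

end Aux

open MeasureTheory Set Filter in
/-- The Matérn covariance in squared-distance form is completely monotone,
with limit `1` at `0⁺`. -/
theorem matern_completely_monotone (r ν : ℝ) (hr : 0 < r) (hν : 0 < ν) :
    CompletelyMonotoneOn (fun t : ℝ =>
        (2 : ℝ) ^ (1 - ν) / Real.Gamma ν * (r * Real.sqrt t) ^ ν *
          besselK ν (r * Real.sqrt t)) ∧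
      Filter.Tendsto (fun t : ℝ =>
          (2 : ℝ) ^ (1 - ν) / Real.Gamma ν * (r * Real.sqrt t) ^ ν *
            besselK ν (r * Real.sqrt t))
        (nhdsWithin 0 (Set.Ioi 0)) (nhds 1) := by
  have hq0 : (0:ℝ) < r ^ 2 / 4 := by positivity
  have hΓ : (0:ℝ) < Real.Gamma ν := Real.Gamma_pos_of_pos hν
  set w : ℝ → ℝ := fun ξ =>
    (r^2/4) ^ ν / Real.Gamma ν * (ξ ^ (-1-ν) * Real.exp (-((r^2/4)/ξ))) with hwdef
  set f : ℝ → ℝ := fun t =>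
    (2 : ℝ) ^ (1 - ν) / Real.Gamma ν * (r * Real.sqrt t) ^ ν *
      besselK ν (r * Real.sqrt t) with hfdef
  set g : ℝ → ℝ := fun t => ∫ ξ in Ioi (0:ℝ), Real.exp (-(t * ξ)) * w ξ with hgdef
  have hw_cont : ContinuousOn w (Ioi 0) := continuousOn_const.mul (w0_cont ν (r^2/4))
  have hw_nn : ∀ ξ ∈ Ioi (0:ℝ), 0 ≤ w ξ := fun ξ hξ =>
    mul_nonneg (by positivity) (w0_nn ν (r^2/4) ξ hξ)
  have hw_int : IntegrableOn w (Ioi 0) :=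
    ((w_integral hν hq0).1.const_mul ((r^2/4) ^ ν / Real.Gamma ν) : _)
  have hw_one : (∫ ξ in Ioi (0:ℝ), w ξ) = 1 := by
    rw [hwdef]
    rw [MeasureTheory.integral_const_mul, (w_integral hν hq0).2]
    field_simp
  have hEq : Set.EqOn f g (Ioi 0) := fun t ht => by
    rw [hfdef, hgdef]
    exact besselK_repr r ν t hr hν ht
  constructor
  · constructor
    · -- smoothness
      have hg := (lap_analytic hw_cont hw_nn hw_int).contDiffOn
        (n := ((⊤ : ℕ∞) : WithTop ℕ∞)) isOpen_Ioi.uniqueDiffOn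
      exact hg.congr hEq
    · intro n t ht
      have h1 : iteratedDeriv n f t = iteratedDeriv n g t :=
        (hEq.iteratedDeriv_of_isOpen isOpen_Ioi n) ht
      rw [h1, lap_iteratedDeriv hw_cont hw_nn hw_int n ht]
      have h2 : (-1:ℝ)^n * (-1:ℝ)^n = 1 := by
        rw [← pow_add, ← two_mul, pow_mul]
        norm_num
      rw [← mul_assoc, h2, one_mul]
      exact lap_nonneg hw_nn n t
  · -- limit at 0⁺
    have hlim : Filter.Tendsto g (nhdsWithin 0 (Ioi 0)) (nhds (∫ ξ in Ioi (0:ℝ), w ξ)) := by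
      refine MeasureTheory.tendsto_integral_filter_of_dominated_convergence w
        (Filter.Eventually.of_forall fun t => ?_) ?_ hw_int ?_
      · refine ContinuousOn.aestronglyMeasurable ?_ measurableSet_Ioi
        exact (Continuous.continuousOn (by fun_prop)).mul hw_cont
      · filter_upwards [self_mem_nhdsWithin] with t ht
        filter_upwards [ae_restrict_mem measurableSet_Ioi] with ξ hξ
        have ht0 : (0:ℝ) < t := ht
        have hξ0 : (0:ℝ) < ξ := hξ
        have hwξ := hw_nn ξ hξ
        rw [Real.norm_eq_abs, abs_of_nonneg (by positivity)]
        have : Real.exp (-(t * ξ)) ≤ 1 := by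
          rw [Real.exp_le_one_iff]
          nlinarith
        nlinarith
      · filter_upwards [ae_restrict_mem measurableSet_Ioi] with ξ hξ
        have : Filter.Tendsto (fun t : ℝ => Real.exp (-(t * ξ)) * w ξ) (nhds 0)
            (nhds (Real.exp (-((0:ℝ) * ξ)) * w ξ)) := by
          exact (Continuous.tendsto (by fun_prop) 0)
        simpa using this.mono_left nhdsWithin_le_nhds
    rw [hw_one] at hlim
    refine Filter.Tendsto.congr' ?_ hlim
    filter_upwards [self_mem_nhdsWithin] with t ht
    exact (hEq ht).symm
end
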